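/- The minimum over probability measures μ on Ω̄ of F(μ) = (1/Λ_p)·esssup_{x∈Ω} ρ(x)/(σ(x) f(x)^p), where f is the density of the absolutely continuous part of μ, equals (1/Λ_p)·(∫_Ω (ρ(x)/σ(x))^{1/p} dx)^p, and it is uniquely achieved by the absolutely continuous measure with density f(x) = (ρ(x)/σ(x))^{1/p} / ∫_Ω (ρ(y)/σ(y))^{1/p} dy. -/

import Mathlib

/-!
Write `f` for the Lebesgue density of `μ` and `Z = ∫_Ω (ρ/σ)^{1/p}`. If
`ρ/(σ f^p) ≤ M < ∞` a.e. on `Ω`, then `(ρ/σ)^{1/p} ≤ M^{1/p} f` a.e. on `Ω`, and integrating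
against `∫_Ω f ≤ μ(Ω) ≤ 1` gives `Z ≤ M^{1/p}`, i.e. `Z^p ≤ F(μ)·Λ_p`. The normalised density
`(ρ/σ)^{1/p}/Z` makes `ρ/(σ f^p)` identically `Z^p`. In the equality case the same pointwise
bound says that `μ` dominates the optimal measure; both are probability measures, so they agree.
-/

open MeasureTheory Set Filter Topology
open scoped ENNReal NNReal

noncomputable section

abbrev E2 := EuclideanSpace ℝ (Fin 2)

/-- The limit functional `F(μ) = (1/Λ_p)·esssup_{x∈Ω} ρ(x)/(σ(x) f(x)^p)`, where `f`
is the density of the absolutely continuous part of `μ` (with `a/0 = ∞`, so that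
`F(μ) = ∞` if `f` vanishes on a set of positive measure). -/
def limitF (Λp p : ℝ) (Ω : Set E2) (σ ρ : E2 → ℝ) (μ : Measure E2) : ℝ≥0∞ :=
  (ENNReal.ofReal Λp)⁻¹ *
    essSup (fun x => ENNReal.ofReal (ρ x) /
      (ENNReal.ofReal (σ x) * (μ.rnDeriv volume x) ^ p)) (volume.restrict Ω)

section DensityRatio

variable {α : Type*} [MeasurableSpace α] {ν μ : Measure α} {s : Set α} {a b : α → ℝ≥0∞}
  {p : ℝ} {M Z : ℝ≥0∞}

def densityRatioEssSup (p : ℝ) (a b : α → ℝ≥0∞) (ν : Measure α) (s : Set α)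
    (μ : Measure α) : ℝ≥0∞ :=
  essSup (fun x => a x / (b x * μ.rnDeriv ν x ^ p)) (ν.restrict s)

lemma ENNReal.div_rpow_inv_le_mul_of_div_le {a b f M : ℝ≥0∞} (hp : 0 < p) (ha : a ≠ 0)
    (hb : b ≠ ∞) (hf : f ≠ ∞) (hM : M ≠ ∞) (h : a / (b * f ^ p) ≤ M) :
    (a / b) ^ p⁻¹ ≤ M ^ p⁻¹ * f := by
  have hbf : b * f ^ p ≠ 0 := by
    rintro h0
    rw [h0, ENNReal.div_zero ha] at h
    exact hM (top_le_iff.1 h)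
  have hbf' : b * f ^ p ≠ ∞ := ENNReal.mul_ne_top hb (ENNReal.rpow_ne_top_of_nonneg hp.le hf)
  have hab : a / b ≤ M * f ^ p := by
    refine ENNReal.div_le_of_le_mul ?_
    calc a ≤ M * (b * f ^ p) := (ENNReal.div_le_iff hbf hbf').1 h
      _ = M * f ^ p * b := by ring
  calc (a / b) ^ p⁻¹ ≤ (M * f ^ p) ^ p⁻¹ := ENNReal.rpow_le_rpow hab (inv_nonneg.2 hp.le)
    _ = M ^ p⁻¹ * f := by
      rw [ENNReal.mul_rpow_of_nonneg _ _ (inv_nonneg.2 hp.le), ENNReal.rpow_rpow_inv hp.ne']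

lemma ENNReal.div_mul_rpow_div_rpow_inv_div {a b Z : ℝ≥0∞} (hp : 0 < p) (ha : a ≠ 0)
    (ha' : a ≠ ∞) (hb : b ≠ 0) (hb' : b ≠ ∞) :
    a / (b * ((a / b) ^ p⁻¹ / Z) ^ p) = Z ^ p := by
  rw [ENNReal.div_rpow_of_nonneg _ _ hp.le, ENNReal.rpow_inv_rpow hp.ne', ← mul_div_assoc,
    ENNReal.mul_div_cancel hb hb', ENNReal.div_div_cancel ha ha']

lemma ae_div_rpow_inv_le_mul_rnDeriv [SigmaFinite μ] (hp : 0 < p)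
    (ha : ∀ᵐ x ∂ν.restrict s, a x ≠ 0) (hb : ∀ᵐ x ∂ν.restrict s, b x ≠ ∞) (hM : M ≠ ∞)
    (hE : densityRatioEssSup p a b ν s μ ≤ M) :
    ∀ᵐ x ∂ν.restrict s, (a x / b x) ^ p⁻¹ ≤ M ^ p⁻¹ * μ.rnDeriv ν x := by
  filter_upwards [ha, hb, ae_restrict_of_ae (μ.rnDeriv_lt_top ν),
    ENNReal.ae_le_essSup (fun x => a x / (b x * μ.rnDeriv ν x ^ p))]
    with x hax hbx hfx hEx
  exact ENNReal.div_rpow_inv_le_mul_of_div_le hp hax hbx hfx.ne hM (hEx.trans hE)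

lemma setLIntegral_div_rpow_inv_le [SigmaFinite μ] (hp : 0 < p)
    (ha : ∀ᵐ x ∂ν.restrict s, a x ≠ 0) (hb : ∀ᵐ x ∂ν.restrict s, b x ≠ ∞) (hM : M ≠ ∞)
    (hE : densityRatioEssSup p a b ν s μ ≤ M) :
    ∫⁻ x in s, (a x / b x) ^ p⁻¹ ∂ν ≤ M ^ p⁻¹ * μ s :=
  calc ∫⁻ x in s, (a x / b x) ^ p⁻¹ ∂ν ≤ ∫⁻ x in s, M ^ p⁻¹ * μ.rnDeriv ν x ∂ν :=
        lintegral_mono_ae (ae_div_rpow_inv_le_mul_rnDeriv hp ha hb hM hE)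
    _ = M ^ p⁻¹ * ∫⁻ x in s, μ.rnDeriv ν x ∂ν :=
        lintegral_const_mul' _ _ (ENNReal.rpow_ne_top_of_nonneg (inv_nonneg.2 hp.le) hM)
    _ ≤ M ^ p⁻¹ * μ s := by gcongr; exact Measure.setLIntegral_rnDeriv_le s

theorem setLIntegral_div_rpow_inv_rpow_le_densityRatioEssSup [SigmaFinite μ] (hp : 0 < p)
    (ha : ∀ᵐ x ∂ν.restrict s, a x ≠ 0) (hb : ∀ᵐ x ∂ν.restrict s, b x ≠ ∞) (hμs : μ s ≤ 1) :
    (∫⁻ x in s, (a x / b x) ^ p⁻¹ ∂ν) ^ p ≤ densityRatioEssSup p a b ν s μ := by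
  set E := densityRatioEssSup p a b ν s μ
  rcases eq_or_ne E ∞ with hE | hE
  · simp [hE]
  rw [← ENNReal.le_rpow_inv_iff hp]
  calc ∫⁻ x in s, (a x / b x) ^ p⁻¹ ∂ν ≤ E ^ p⁻¹ * μ s :=
        setLIntegral_div_rpow_inv_le hp ha hb hE le_rfl
    _ ≤ E ^ p⁻¹ := mul_le_of_le_one_right' hμs

lemma rnDeriv_restrict_withDensity_ae_eq [SigmaFinite ν] (hs : MeasurableSet s)
    {d : α → ℝ≥0∞} (hd : AEMeasurable d (ν.restrict s)) :
    ((ν.restrict s).withDensity d).rnDeriv ν =ᵐ[ν.restrict s] d := by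
  rw [← withDensity_indicator hs]
  filter_upwards [ae_restrict_of_ae (Measure.rnDeriv_withDensity₀ ν
    ((aemeasurable_indicator_iff hs).2 hd)), ae_restrict_mem hs] with x hx hxs
  rw [hx, Set.indicator_of_mem hxs]

theorem densityRatioEssSup_withDensity_div_rpow_inv [SigmaFinite ν] (hs : MeasurableSet s)
    (hνs : ν s ≠ 0) (hp : 0 < p) (ha : ∀ᵐ x ∂ν.restrict s, a x ≠ 0 ∧ a x ≠ ∞)
    (hb : ∀ᵐ x ∂ν.restrict s, b x ≠ 0 ∧ b x ≠ ∞) (ha_meas : AEMeasurable a (ν.restrict s))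
    (hb_meas : AEMeasurable b (ν.restrict s)) (Z : ℝ≥0∞) :
    densityRatioEssSup p a b ν s
      ((ν.restrict s).withDensity fun x => (a x / b x) ^ p⁻¹ / Z) = Z ^ p := by
  have hconst : (fun x => a x / (b x *
      ((ν.restrict s).withDensity fun x => (a x / b x) ^ p⁻¹ / Z).rnDeriv ν x ^ p))
      =ᵐ[ν.restrict s] fun _ => Z ^ p := by
    filter_upwards [ha, hb, rnDeriv_restrict_withDensity_ae_eq hs
      (d := fun x => (a x / b x) ^ p⁻¹ / Z) (((ha_meas.div hb_meas).pow_const p⁻¹).div_const Z)]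
      with x ⟨ha0, hatop⟩ ⟨hb0, hbtop⟩ hd
    rw [hd]
    exact ENNReal.div_mul_rpow_div_rpow_inv_div hp ha0 hatop hb0 hbtop
  rw [densityRatioEssSup, essSup_congr_ae hconst, essSup_const _ (by simpa using hνs)]

theorem eq_withDensity_div_rpow_inv_of_densityRatioEssSup_le [IsProbabilityMeasure μ]
    (hs : MeasurableSet s) (hp : 0 < p) (ha : ∀ᵐ x ∂ν.restrict s, a x ≠ 0)
    (hb : ∀ᵐ x ∂ν.restrict s, b x ≠ ∞) (hZ : ∫⁻ x in s, (a x / b x) ^ p⁻¹ ∂ν = Z)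
    (hZ0 : Z ≠ 0) (hZtop : Z ≠ ∞) (hE : densityRatioEssSup p a b ν s μ ≤ Z ^ p) :
    μ = (ν.restrict s).withDensity fun x => (a x / b x) ^ p⁻¹ / Z := by
  have hle : (fun x => (a x / b x) ^ p⁻¹ / Z) ≤ᵐ[ν.restrict s] μ.rnDeriv ν := by
    filter_upwards [ae_div_rpow_inv_le_mul_rnDeriv hp ha hb
      (ENNReal.rpow_ne_top_of_nonneg hp.le hZtop) hE] with x hx
    rw [ENNReal.rpow_rpow_inv hp.ne'] at hx
    exact ENNReal.div_le_of_le_mul (hx.trans_eq (mul_comm _ _))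
  have : IsProbabilityMeasure ((ν.restrict s).withDensity fun x => (a x / b x) ^ p⁻¹ / Z) := by
    constructor
    rw [withDensity_apply _ MeasurableSet.univ, Measure.restrict_univ]
    simp_rw [div_eq_mul_inv _ Z]
    rw [lintegral_mul_const' _ _ (ENNReal.inv_ne_top.2 hZ0), ← div_eq_mul_inv, hZ,
      ENNReal.div_self hZ0 hZtop]
  refine (Measure.eq_of_le_of_isProbabilityMeasure ?_).symm
  calc (ν.restrict s).withDensity (fun x => (a x / b x) ^ p⁻¹ / Z)
      ≤ (ν.restrict s).withDensity (μ.rnDeriv ν) := withDensity_mono hle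
    _ = (ν.withDensity (μ.rnDeriv ν)).restrict s := (restrict_withDensity hs _).symm
    _ ≤ ν.withDensity (μ.rnDeriv ν) := Measure.restrict_le_self
    _ ≤ μ := Measure.withDensity_rnDeriv_le μ ν

end DensityRatio

section RealData

variable {X : Type*} [MeasurableSpace X] {ν : Measure X} {s : Set X} {f g : X → ℝ}

lemma ENNReal.ofReal_div_rpow {r t q : ℝ} (hr : 0 ≤ r) (ht : 0 < t) (hq : 0 ≤ q) :
    ENNReal.ofReal ((r / t) ^ q) = (ENNReal.ofReal r / ENNReal.ofReal t) ^ q := by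
  rw [← ENNReal.ofReal_rpow_of_nonneg (by positivity) hq, ENNReal.ofReal_div_of_pos ht]

lemma ae_restrict_ofReal_ne_zero_ne_top (hs : MeasurableSet s) (hf : ∀ x ∈ s, 0 < f x) :
    ∀ᵐ x ∂ν.restrict s, ENNReal.ofReal (f x) ≠ 0 ∧ ENNReal.ofReal (f x) ≠ ∞ := by
  filter_upwards [ae_restrict_mem hs] with x hx
  exact ⟨(ENNReal.ofReal_pos.2 (hf x hx)).ne', ENNReal.ofReal_ne_top⟩

lemma ofReal_setIntegral_div_rpow {q : ℝ} (hs : MeasurableSet s) (hf : ∀ x ∈ s, 0 ≤ f x)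
    (hg : ∀ x ∈ s, 0 < g x) (hq : 0 ≤ q) (hint : IntegrableOn (fun x => (f x / g x) ^ q) s ν) :
    ENNReal.ofReal (∫ x in s, (f x / g x) ^ q ∂ν) =
      ∫⁻ x in s, (ENNReal.ofReal (f x) / ENNReal.ofReal (g x)) ^ q ∂ν := by
  rw [ofReal_integral_eq_lintegral_ofReal hint]
  · exact setLIntegral_congr_fun hs fun x hx => ENNReal.ofReal_div_rpow (hf x hx) (hg x hx) hq
  · filter_upwards [ae_restrict_mem hs] with x hx
    exact Real.rpow_nonneg (div_nonneg (hf x hx) (hg x hx).le) q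

lemma restrict_withDensity_ofReal_div_rpow_div {p I : ℝ} (hs : MeasurableSet s)
    (hf : ∀ x ∈ s, 0 ≤ f x) (hg : ∀ x ∈ s, 0 < g x) (hp : 0 ≤ p) (hI : 0 < I) :
    (ν.restrict s).withDensity (fun x => ENNReal.ofReal ((f x / g x) ^ (1 / p) / I)) =
      (ν.restrict s).withDensity fun x =>
        (ENNReal.ofReal (f x) / ENNReal.ofReal (g x)) ^ p⁻¹ / ENNReal.ofReal I := by
  refine withDensity_congr_ae ?_
  filter_upwards [ae_restrict_mem hs] with x hx
  rw [ENNReal.ofReal_div_of_pos hI,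
    ENNReal.ofReal_div_rpow (hf x hx) (hg x hx) (by positivity), one_div]

lemma setIntegral_pos_of_isOpen [TopologicalSpace X] [OpensMeasurableSpace X]
    [ν.IsOpenPosMeasure] (hso : IsOpen s) (hsne : s.Nonempty) (hint : IntegrableOn f s ν)
    (hf : ∀ x ∈ s, 0 < f x) : 0 < ∫ x in s, f x ∂ν := by
  have hnonneg : 0 ≤ᵐ[ν.restrict s] f := by
    filter_upwards [ae_restrict_mem hso.measurableSet] with x hx using (hf x hx).le
  rw [setIntegral_pos_iff_support_of_nonneg_ae hnonneg hint]
  exact (hso.measure_pos ν hsne).trans_le (measure_mono fun x hx => ⟨(hf x hx).ne', hx⟩)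

end RealData

lemma limitF_eq_mul_densityRatioEssSup (Λp p : ℝ) (Ω : Set E2) (σ ρ : E2 → ℝ)
    (μ : Measure E2) :
    limitF Λp p Ω σ ρ μ = (ENNReal.ofReal Λp)⁻¹ * densityRatioEssSup p
      (fun x => ENNReal.ofReal (ρ x)) (fun x => ENNReal.ofReal (σ x)) volume Ω μ :=
  rfl

/-- The minimum of `F` over probability measures on `closure Ω` equals
`(1/Λ_p)·(∫_Ω (ρ/σ)^{1/p})^p`, uniquely attained by the absolutely continuous
measure with density `(ρ/σ)^{1/p} / ∫_Ω (ρ/σ)^{1/p}`. -/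
theorem limitF_min (p Λp : ℝ) (hp : 1 ≤ p) (hΛ : 0 < Λp)
    (Ω : Set E2) (hΩo : IsOpen Ω) (hΩb : Bornology.IsBounded Ω) (hΩne : Ω.Nonempty)
    (σ ρ : E2 → ℝ)
    (hσc : ContinuousOn σ (closure Ω)) (hρc : ContinuousOn ρ (closure Ω))
    (hσ : ∀ x ∈ closure Ω, 0 < σ x) (hρ : ∀ x ∈ closure Ω, 0 < ρ x)
    (μinf : Measure E2)
    (hμinf : μinf = (volume.restrict Ω).withDensity (fun x =>
      ENNReal.ofReal ((ρ x / σ x) ^ (1 / p) / ∫ y in Ω, (ρ y / σ y) ^ (1 / p)))) :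
    (∀ μ : Measure E2, IsProbabilityMeasure μ → μ (closure Ω) = 1 →
      limitF Λp p Ω σ ρ μinf ≤ limitF Λp p Ω σ ρ μ) ∧
    limitF Λp p Ω σ ρ μinf =
      (ENNReal.ofReal Λp)⁻¹ *
        ENNReal.ofReal ((∫ x in Ω, (ρ x / σ x) ^ (1 / p)) ^ p) ∧
    (∀ μ : Measure E2, IsProbabilityMeasure μ → μ (closure Ω) = 1 →
      limitF Λp p Ω σ ρ μ = limitF Λp p Ω σ ρ μinf → μ = μinf) := by
  have hp0 : 0 < p := one_pos.trans_le hp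
  have hΩm : MeasurableSet Ω := hΩo.measurableSet
  have hσΩ : ∀ x ∈ Ω, 0 < σ x := fun x hx => hσ x (subset_closure hx)
  have hρΩ : ∀ x ∈ Ω, 0 < ρ x := fun x hx => hρ x (subset_closure hx)
  set I := ∫ x in Ω, (ρ x / σ x) ^ (1 / p)
  have hint : IntegrableOn (fun x => (ρ x / σ x) ^ (1 / p)) Ω :=
    (((hρc.div hσc fun x hx => (hσ x hx).ne').rpow_const fun _ _ => Or.inr (by positivity))
      |>.integrableOn_compact hΩb.isCompact_closure).mono_set subset_closure
  have hI : 0 < I := setIntegral_pos_of_isOpen hΩo hΩne hint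
    fun x hx => Real.rpow_pos_of_pos (div_pos (hρΩ x hx) (hσΩ x hx)) _
  have hZ : ∫⁻ x in Ω, (ENNReal.ofReal (ρ x) / ENNReal.ofReal (σ x)) ^ p⁻¹ = ENNReal.ofReal I :=
    one_div p ▸ (ofReal_setIntegral_div_rpow hΩm (fun x hx => (hρΩ x hx).le) hσΩ
      (by positivity) hint).symm
  rw [restrict_withDensity_ofReal_div_rpow_div hΩm (fun x hx => (hρΩ x hx).le) hσΩ hp0.le hI]
    at hμinf
  have ha := ae_restrict_ofReal_ne_zero_ne_top (ν := volume) hΩm hρΩ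
  have hb := ae_restrict_ofReal_ne_zero_ne_top (ν := volume) hΩm hσΩ
  have hE : densityRatioEssSup p (fun x => ENNReal.ofReal (ρ x)) (fun x => ENNReal.ofReal (σ x))
      volume Ω μinf = ENNReal.ofReal I ^ p :=
    hμinf ▸ densityRatioEssSup_withDensity_div_rpow_inv hΩm (hΩo.measure_pos volume hΩne).ne'
      hp0 ha hb ((hρc.mono subset_closure).aemeasurable hΩm).ennreal_ofReal
      ((hσc.mono subset_closure).aemeasurable hΩm).ennreal_ofReal _
  simp only [limitF_eq_mul_densityRatioEssSup, hE]
  refine ⟨fun μ _ _ => ?_, by rw [ENNReal.ofReal_rpow_of_nonneg hI.le hp0.le], fun μ _ _ hμ => ?_⟩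
  · gcongr
    exact hZ ▸ setLIntegral_div_rpow_inv_rpow_le_densityRatioEssSup hp0 (ha.mono fun _ h => h.1)
      (hb.mono fun _ h => h.2) prob_le_one
  · rw [ENNReal.mul_right_inj (ENNReal.inv_ne_zero.2 ENNReal.ofReal_ne_top)
      (ENNReal.inv_ne_top.2 (ENNReal.ofReal_pos.2 hΛ).ne')] at hμ
    exact hμinf ▸ eq_withDensity_div_rpow_inv_of_densityRatioEssSup_le hΩm hp0
      (ha.mono fun _ h => h.1) (hb.mono fun _ h => h.2) hZ (ENNReal.ofReal_pos.2 hI).ne'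
      ENNReal.ofReal_ne_top hμ.le
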